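/- arXiv:2111.01536 — 2 statements merged into one kernel-verified Lean document; each statement's English description precedes it below -/
import Mathlib

section
/- A family of operators admitting a positive definite fixed point of the adjoint transfer map can be similarity-transformed into a trace-preserving (Kraus-complete) family. Precisely: let ι be a finite index type, B : ι → Matrix (Fin r) (Fin r) ℂ, and let σ be a positive definite Hermitian r×r complex matrix satisfying Σ_{i ∈ ι} B_iᴴ ⬝ σ ⬝ B_i = σ. Define B'_i = σ^{1/2} ⬝ B_i ⬝ σ^{-1/2}, where σ^{1/2} is the positive semidefinite square root of σ and σ^{-1/2} its inverse. Then Σ_{i ∈ ι} B'_iᴴ ⬝ B'_i = 1. -/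
open Matrix BigOperators ComplexOrder

noncomputable def Matrix.PosSemidef.sqrt {n : Type*} [Fintype n] [DecidableEq n]
    {A : Matrix n n ℂ} (hA : A.PosSemidef) : Matrix n n ℂ :=
  hA.1.eigenvectorUnitary.1 * diagonal ((↑) ∘ (√·) ∘ hA.1.eigenvalues) *
    (star hA.1.eigenvectorUnitary : Matrix n n ℂ)

namespace Matrix.PosSemidef

variable {n : Type*} [Fintype n] [DecidableEq n] {A : Matrix n n ℂ} (hA : A.PosSemidef)

theorem sqrt_eq_conjStarAlgAut : hA.sqrt = Unitary.conjStarAlgAut ℂ _ hA.1.eigenvectorUnitary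
    (diagonal ((↑) ∘ (√·) ∘ hA.1.eigenvalues)) := rfl

theorem isHermitian_sqrt : hA.sqrt.IsHermitian := by
  rw [IsHermitian, ← star_eq_conjTranspose, sqrt_eq_conjStarAlgAut, ← map_star, star_eq_conjTranspose,
    diagonal_conjTranspose]
  congr 2
  ext i
  simp

theorem sqrt_mul_sqrt : hA.sqrt * hA.sqrt = A := by
  rw [sqrt_eq_conjStarAlgAut, ← map_mul, diagonal_mul_diagonal]
  conv_rhs => rw [hA.1.spectral_theorem]
  congr 2
  ext i
  simp [← Complex.ofReal_mul, Real.mul_self_sqrt (hA.eigenvalues_nonneg i)]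

end Matrix.PosSemidef

theorem Matrix.PosDef.isUnit_det_sqrt {n : Type*} [Fintype n] [DecidableEq n]
    {A : Matrix n n ℂ} (hA : A.PosDef) : IsUnit hA.posSemidef.sqrt.det := by
  have hdet : IsUnit (hA.posSemidef.sqrt * hA.posSemidef.sqrt).det := by
    rw [hA.posSemidef.sqrt_mul_sqrt]
    exact hA.det_pos.ne'.isUnit
  rw [det_mul] at hdet
  exact isUnit_of_mul_isUnit_left hdet

theorem Matrix.sum_conjTranspose_mul_conj_eq_one {n ι R : Type*} [Fintype n] [DecidableEq n]
    [Fintype ι] [CommRing R] [StarRing R] {S : Matrix n n R} (hS : S.IsHermitian)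
    (hdet : IsUnit S.det) (B : ι → Matrix n n R)
    (hfix : ∑ i, (B i)ᴴ * (S * S) * B i = S * S) :
    ∑ i, (S * B i * S⁻¹)ᴴ * (S * B i * S⁻¹) = 1 := by
  have hSinv : (S⁻¹)ᴴ = S⁻¹ := by rw [conjTranspose_nonsing_inv, hS.eq]
  calc ∑ i, (S * B i * S⁻¹)ᴴ * (S * B i * S⁻¹)
      = S⁻¹ * (∑ i, (B i)ᴴ * (S * S) * B i) * S⁻¹ := by
        simp only [Finset.mul_sum, Finset.sum_mul, conjTranspose_mul, hSinv, hS.eq, mul_assoc]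
    _ = 1 := by
        rw [hfix, ← mul_assoc, nonsing_inv_mul S hdet, one_mul, mul_nonsing_inv S hdet]

/-- A family of operators admitting a positive definite fixed point of the adjoint transfer
map can be similarity-transformed into a trace-preserving (Kraus-complete) family: if
`Σ_i B_iᴴ ⬝ σ ⬝ B_i = σ` for a positive definite Hermitian `σ`, then the matrices
`B'_i = σ^{1/2} ⬝ B_i ⬝ σ^{-1/2}` satisfy the Kraus completeness relation `Σ_i B'_iᴴ ⬝ B'_i = 1`,
where `σ^{1/2}` is the positive semidefinite square root of `σ`. -/
theorem similarity_transform_trace_preserving {r : ℕ} {ι : Type*} [Fintype ι]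
    (B : ι → Matrix (Fin r) (Fin r) ℂ)
    (σ : Matrix (Fin r) (Fin r) ℂ) (hσ : σ.PosDef)
    (hfix : ∑ i : ι, (B i)ᴴ * σ * B i = σ) :
    ∑ i : ι,
        (hσ.posSemidef.sqrt * B i * (hσ.posSemidef.sqrt)⁻¹)ᴴ *
          (hσ.posSemidef.sqrt * B i * (hσ.posSemidef.sqrt)⁻¹) = 1 := by
  rw [← hσ.posSemidef.sqrt_mul_sqrt] at hfix
  exact sum_conjTranspose_mul_conj_eq_one hσ.posSemidef.isHermitian_sqrt hσ.isUnit_det_sqrt B hfix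
end

section
/- The trace of an ordered product of sums of Kronecker products of conjugated matrices with themselves factorizes as a sum of squared moduli of traces; in particular it is a nonnegative real number. Precisely: let B_t : Fin μ → Matrix (Fin r) (Fin r) ℂ for t ∈ Fin N. Then trace((Σ_{β} conj(B_N(β)) ⊗ₖ B_N(β)) ⬝ ⋯ ⬝ (Σ_{β} conj(B_1(β)) ⊗ₖ B_1(β))) = Σ_{β₁,…,β_N ∈ Fin μ} conj(trace(B_N(β_N) ⬝ ⋯ ⬝ B_1(β_1))) · trace(B_N(β_N) ⬝ ⋯ ⬝ B_1(β_1)); consequently this trace is real and nonnegative. In particular, every value of the joint value function of a circular Hidden Quantum Markov Model and every entry of a c-LPS contraction is a nonnegative real number. -/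
open Matrix Kronecker BigOperators

/-- Ordered product `M (N-1) * ⋯ * M 1 * M 0` of a finite family of square matrices. -/
noncomputable def mprod {n : Type*} [Fintype n] [DecidableEq n] {N : ℕ}
    (M : Fin N → Matrix n n ℂ) : Matrix n n ℂ :=
  ((List.ofFn M).reverse).prod

lemma mprod_zero {n : Type*} [Fintype n] [DecidableEq n]
    (M : Fin 0 → Matrix n n ℂ) : mprod M = 1 := by
  simp [mprod]

lemma mprod_succ {n : Type*} [Fintype n] [DecidableEq n] {N : ℕ}
    (M : Fin (N + 1) → Matrix n n ℂ) :
    mprod M = mprod (fun t => M t.succ) * M 0 := by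
  simp [mprod, List.ofFn_succ, Function.comp]

lemma key {r μ : ℕ} : ∀ {N : ℕ} (B : Fin N → Fin μ → Matrix (Fin r) (Fin r) ℂ),
    (mprod fun t : Fin N => ∑ β : Fin μ, (B t β).map (starRingEnd ℂ) ⊗ₖ B t β) =
      ∑ β : Fin N → Fin μ,
        (mprod fun t => B t (β t)).map (starRingEnd ℂ) ⊗ₖ (mprod fun t => B t (β t)) := by
  intro N
  induction N with
  | zero =>
    intro B
    simp [mprod_zero, Matrix.one_kronecker_one]
  | succ N ih =>
    intro B
    rw [mprod_succ, ih (fun t => B t.succ)]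
    rw [Finset.sum_mul_sum]
    have hsum : ∀ (F : (Fin (N+1) → Fin μ) → Matrix (Fin r × Fin r) (Fin r × Fin r) ℂ),
        ∑ β, F β = ∑ b0 : Fin μ, ∑ β : Fin N → Fin μ, F (Fin.cons b0 β) := by
      intro F
      rw [show (∑ β, F β) = ∑ p : Fin μ × (Fin N → Fin μ), F (Fin.cons p.1 p.2) from
        (Fintype.sum_equiv (Fin.consEquiv fun _ => Fin μ) _ _ fun p => rfl).symm,
        Fintype.sum_prod_type]
    rw [hsum, Finset.sum_comm]
    refine Finset.sum_congr rfl fun b0 _ => Finset.sum_congr rfl fun β _ => ?_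
    have h : (fun t : Fin (N+1) => B t (Fin.cons (α := fun _ => Fin μ) b0 β t)) =
        Fin.cons (α := fun _ => Matrix (Fin r) (Fin r) ℂ) (B 0 b0)
          (fun t : Fin N => B t.succ (β t)) := by
      funext t
      refine Fin.cases ?_ ?_ t <;> simp
    rw [h, mprod_succ]
    simp [Matrix.map_mul, Matrix.mul_kronecker_mul]

/-- The trace of an ordered product of sums of Kronecker products of conjugated matrices with
themselves factorizes as a sum of squared moduli of traces:
`trace((Σ_β conj(B_N(β)) ⊗ₖ B_N(β)) ⬝ ⋯ ⬝ (Σ_β conj(B_1(β)) ⊗ₖ B_1(β)))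
  = Σ_{β₁,…,β_N} conj(trace(B_N(β_N) ⬝ ⋯ ⬝ B_1(β₁))) · trace(B_N(β_N) ⬝ ⋯ ⬝ B_1(β₁))`;
consequently this trace is a nonnegative real number. -/
theorem trace_transfer_product_factorizes_and_nonneg {N r μ : ℕ}
    (B : Fin N → Fin μ → Matrix (Fin r) (Fin r) ℂ) :
    ((mprod fun t : Fin N =>
        ∑ β : Fin μ, (B t β).map (starRingEnd ℂ) ⊗ₖ B t β).trace =
      ∑ β : Fin N → Fin μ,
        (starRingEnd ℂ) (mprod fun t => B t (β t)).trace *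
          (mprod fun t => B t (β t)).trace) ∧
    ((mprod fun t : Fin N =>
        ∑ β : Fin μ, (B t β).map (starRingEnd ℂ) ⊗ₖ B t β).trace).im = 0 ∧
    0 ≤ ((mprod fun t : Fin N =>
        ∑ β : Fin μ, (B t β).map (starRingEnd ℂ) ⊗ₖ B t β).trace).re := by
  have htr : (mprod fun t : Fin N =>
        ∑ β : Fin μ, (B t β).map (starRingEnd ℂ) ⊗ₖ B t β).trace =
      ∑ β : Fin N → Fin μ,
        (starRingEnd ℂ) (mprod fun t => B t (β t)).trace *
          (mprod fun t => B t (β t)).trace := by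
    rw [key B, Matrix.trace_sum]
    refine Finset.sum_congr rfl fun β _ => ?_
    rw [Matrix.trace_kronecker]
    congr 1
    simp [Matrix.trace, Matrix.diag, map_sum]
  have hreal : (mprod fun t : Fin N =>
        ∑ β : Fin μ, (B t β).map (starRingEnd ℂ) ⊗ₖ B t β).trace =
      ((∑ β : Fin N → Fin μ,
        Complex.normSq (mprod fun t => B t (β t)).trace : ℝ) : ℂ) := by
    rw [htr]
    push_cast
    exact Finset.sum_congr rfl fun β _ =>
      (Complex.normSq_eq_conj_mul_self (z := (mprod fun t => B t (β t)).trace)).symm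
  refine ⟨htr, ?_, ?_⟩
  · rw [hreal]; simp
  · rw [hreal]
    simpa using Finset.sum_nonneg fun β _ => Complex.normSq_nonneg _
end
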